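/- Under the compatibility condition r/⟨r⟩ₐ + ⟨d⟩ₕ/d = 2, any positive C¹ L-periodic function φ with ∫₀ᴸ φ² dx = 1 satisfying I(φ; λ₀, d, r) = −2⟨r⟩ₐ must be the constant function φ ≡ 1/√L. -/

import Mathlib

/-!
Write `S = ∫ 1/d`, `B = ∫ φ²/d`, `C = ∫ 1/(dφ²)`, so that `⟨d⟩ₕ = L/S`. The compatibility condition
turns the potential term into `∫ r φ² = 2⟨r⟩ₐ - ⟨r⟩ₐ⟨d⟩ₕ B`, while Cauchy–Schwarz (`S² ≤ B C`)
bounds the nonlocal term by `λ₀² L² / C ≤ ⟨r⟩ₐ⟨d⟩ₕ B`. Hence `I(φ) ≥ ∫ d|φ'|² - 2⟨r⟩ₐ`, and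
equality forces the Dirichlet energy, whose integrand is continuous and nonnegative, to vanish.
So `φ' = 0` on one period, hence everywhere, and the normalisation fixes the constant.
-/

open Real Set

theorem sq_intervalIntegral_mul_le_of_weight_nonneg {a b : ℝ} (hab : a ≤ b) {w f g : ℝ → ℝ}
    (hw : Continuous w) (hf : Continuous f) (hg : Continuous g) (hw0 : ∀ x ∈ Icc a b, 0 ≤ w x) :
    (∫ x in a..b, w x * f x * g x) ^ 2
      ≤ (∫ x in a..b, w x * f x ^ 2) * ∫ x in a..b, w x * g x ^ 2 := by
  set F := ∫ x in a..b, w x * f x ^ 2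
  set M := ∫ x in a..b, w x * f x * g x
  set G := ∫ x in a..b, w x * g x ^ 2
  have hquad : ∀ t : ℝ, 0 ≤ F * (t * t) + -2 * M * t + G := by
    intro t
    have hexpand : ∫ x in a..b, w x * (t * f x - g x) ^ 2 = F * (t * t) + -2 * M * t + G := by
      have hpt : ∀ x, w x * (t * f x - g x) ^ 2
          = (t * t) * (w x * f x ^ 2) + (-2 * t) * (w x * f x * g x) + w x * g x ^ 2 :=
        fun x => by ring
      simp_rw [hpt]
      rw [intervalIntegral.integral_add (Continuous.intervalIntegrable (by fun_prop) _ _)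
          (Continuous.intervalIntegrable (by fun_prop) _ _),
        intervalIntegral.integral_add (Continuous.intervalIntegrable (by fun_prop) _ _)
          (Continuous.intervalIntegrable (by fun_prop) _ _),
        intervalIntegral.integral_const_mul, intervalIntegral.integral_const_mul]
      ring
    rw [← hexpand]
    exact intervalIntegral.integral_nonneg hab fun x hx => mul_nonneg (hw0 x hx) (sq_nonneg _)
  have := discrim_le_zero hquad
  rw [discrim] at this
  linarith

theorem sq_intervalIntegral_one_div_le {a b : ℝ} (hab : a ≤ b) {d φ : ℝ → ℝ} (hd : Continuous d)
    (hd_pos : ∀ x, 0 < d x) (hφ : Continuous φ) (hφ_ne : ∀ x, φ x ≠ 0) :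
    (∫ x in a..b, 1 / d x) ^ 2
      ≤ (∫ x in a..b, φ x ^ 2 / d x) * ∫ x in a..b, 1 / (d x * φ x ^ 2) := by
  have hd_ne : ∀ x, d x ≠ 0 := fun x => (hd_pos x).ne'
  have hCS := sq_intervalIntegral_mul_le_of_weight_nonneg hab (w := fun x => 1 / d x)
    (g := fun x => 1 / φ x) (continuous_const.div hd hd_ne) hφ (continuous_const.div hφ hφ_ne)
    fun x _ => (one_div_pos.2 (hd_pos x)).le
  convert hCS using 2 <;> refine intervalIntegral.integral_congr fun x _ => ?_ <;>
    field_simp [hd_ne x, hφ_ne x]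

theorem integral_mul_sq_add_le_of_compat {L rbar dh lam0 : ℝ} (hL : 0 < L) {d r φ : ℝ → ℝ}
    (hd : Continuous d) (hd_pos : ∀ x, 0 < d x) (hφ : Continuous φ) (hφ_pos : ∀ x, 0 < φ x)
    (hφ_norm : ∫ x in (0:ℝ)..L, φ x ^ 2 = 1) (hrbar : 0 ≤ rbar)
    (hdh : dh = L / ∫ x in (0:ℝ)..L, 1 / d x) (hcompat : ∀ x, r x = rbar * (2 - dh / d x))
    (hlam0 : lam0 = √(rbar / dh)) :
    (∫ x in (0:ℝ)..L, r x * φ x ^ 2) + lam0 ^ 2 * L ^ 2 / ∫ x in (0:ℝ)..L, 1 / (d x * φ x ^ 2)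
      ≤ 2 * rbar := by
  have hd_ne : ∀ x, d x ≠ 0 := fun x => (hd_pos x).ne'
  set S := ∫ x in (0:ℝ)..L, 1 / d x
  set B := ∫ x in (0:ℝ)..L, φ x ^ 2 / d x
  set C := ∫ x in (0:ℝ)..L, 1 / (d x * φ x ^ 2)
  have hS : 0 < S := intervalIntegral.intervalIntegral_pos_of_pos
    ((continuous_const.div hd hd_ne).intervalIntegrable 0 L) (fun x => one_div_pos.2 (hd_pos x)) hL
  have hC : 0 < C := intervalIntegral.intervalIntegral_pos_of_pos
    ((continuous_const.div (hd.mul (hφ.pow 2))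
      fun x => (mul_pos (hd_pos x) (pow_pos (hφ_pos x) 2)).ne').intervalIntegrable 0 L)
    (fun x => by have := hd_pos x; have := hφ_pos x; positivity) hL
  have hdh_pos : 0 < dh := hdh ▸ div_pos hL hS
  have hpotential : ∫ x in (0:ℝ)..L, r x * φ x ^ 2 = 2 * rbar - rbar * dh * B := by
    have hpt : ∀ x, r x * φ x ^ 2 = 2 * rbar * φ x ^ 2 - rbar * dh * (φ x ^ 2 / d x) := fun x => by
      rw [hcompat x]; field_simp [hd_ne x]
    simp_rw [hpt]
    rw [intervalIntegral.integral_sub (Continuous.intervalIntegrable (by fun_prop) _ _)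
        (Continuous.intervalIntegrable (by fun_prop (disch := exact hd_ne _)) _ _),
      intervalIntegral.integral_const_mul, intervalIntegral.integral_const_mul, hφ_norm, mul_one]
  have hpenalty : lam0 ^ 2 * L ^ 2 / C ≤ rbar * dh * B := by
    rw [div_le_iff₀ hC]
    calc lam0 ^ 2 * L ^ 2 = rbar * dh * S ^ 2 := by
          rw [hlam0, sq_sqrt (div_nonneg hrbar hdh_pos.le), hdh]; field_simp
      _ ≤ rbar * dh * (B * C) := mul_le_mul_of_nonneg_left
          (sq_intervalIntegral_one_div_le hL.le hd hd_pos hφ fun x => (hφ_pos x).ne')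
          (mul_nonneg hrbar hdh_pos.le)
      _ = rbar * dh * B * C := by ring
  linarith

theorem eqOn_zero_of_intervalIntegral_eq_zero {a b : ℝ} (hab : a < b) {f : ℝ → ℝ}
    (hf : ContinuousOn f (Icc a b)) (hf0 : ∀ x ∈ Icc a b, 0 ≤ f x)
    (h : ∫ x in a..b, f x = 0) : EqOn f 0 (Icc a b) := by
  intro x hx
  by_contra hne
  have := intervalIntegral.integral_pos hab hf (fun y hy => hf0 y (Ioc_subset_Icc_self hy))
    ⟨x, hx, (hf0 x hx).lt_of_ne' hne⟩
  linarith

theorem Function.Periodic.deriv {𝕜 F : Type*} [NontriviallyNormedField 𝕜] [NormedAddCommGroup F]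
    [NormedSpace 𝕜 F] {f : 𝕜 → F} {c : 𝕜} (h : Function.Periodic f c) :
    Function.Periodic (deriv f) c := fun x => by
  rw [← deriv_comp_add_const, h.funext]

theorem Function.Periodic.eq_of_deriv_eqOn_zero {E : Type*} [NormedAddCommGroup E]
    [NormedSpace ℝ E] {f : ℝ → E} {c : ℝ} (h : Function.Periodic f c) (hc : 0 < c)
    (hf : Differentiable ℝ f) (hf' : EqOn (_root_.deriv f) 0 (Ico 0 c)) (x y : ℝ) : f x = f y := by
  refine is_const_of_deriv_eq_zero hf (fun z => ?_) x y
  obtain ⟨z', hz', hzz'⟩ := h.deriv.exists_mem_Ico₀ hc z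
  rw [hzz', hf' hz', Pi.zero_apply]

theorem eq_one_div_sqrt_of_sq_mul_eq_one {c L : ℝ} (hc : 0 < c) (h : c ^ 2 * L = 1) :
    c = 1 / √L := by
  refine eq_one_div_of_mul_eq_one_left ?_
  rw [← sqrt_sq hc.le, ← sqrt_mul (sq_nonneg c), h, sqrt_one]

theorem equality_forces_constant_minimizer_general
    (L : ℝ) (hL : 0 < L)
    (d : ℝ → ℝ) (hd_smooth : ContDiff ℝ 1 d) (hd_pos : ∀ x, 0 < d x)
    (r : ℝ → ℝ)
    (rbar dh lam0 : ℝ)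
    (hrbar_pos : 0 < rbar)
    (hdh : dh = L / ∫ x in (0:ℝ)..L, 1 / d x)
    (hcompat : ∀ x, r x = rbar * (2 - dh / d x))
    (hlam0 : lam0 = Real.sqrt (rbar / dh)) :
    ∀ φ : ℝ → ℝ, ContDiff ℝ 1 φ → (∀ x, 0 < φ x) → Function.Periodic φ L →
      (∫ x in (0:ℝ)..L, φ x ^ 2) = 1 →
      (∫ x in (0:ℝ)..L, d x * |deriv φ x| ^ 2)
        - (∫ x in (0:ℝ)..L, r x * φ x ^ 2)
        - lam0 ^ 2 * L ^ 2 / (∫ x in (0:ℝ)..L, 1 / (d x * φ x ^ 2))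
        = -2 * rbar →
      ∀ x, φ x = 1 / Real.sqrt L := by
  intro φ hφ hφ_pos hφ_per hφ_norm heq
  have hd := hd_smooth.continuous
  have henergy_cont : Continuous fun x => d x * |deriv φ x| ^ 2 :=
    hd.mul ((hφ.continuous_deriv le_rfl).abs.pow 2)
  have henergy_nonneg : ∀ x, 0 ≤ d x * |deriv φ x| ^ 2 := fun x => by
    have := hd_pos x; positivity
  have hlower := integral_mul_sq_add_le_of_compat hL hd hd_pos hφ.continuous hφ_pos hφ_norm
    hrbar_pos.le hdh hcompat hlam0
  have henergy : ∫ x in (0:ℝ)..L, d x * |deriv φ x| ^ 2 = 0 :=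
    le_antisymm (by linarith) (intervalIntegral.integral_nonneg hL.le fun x _ => henergy_nonneg x)
  have hderiv : EqOn (deriv φ) 0 (Ico 0 L) := fun x hx => by
    have := eqOn_zero_of_intervalIntegral_eq_zero hL henergy_cont.continuousOn
      (fun y _ => henergy_nonneg y) henergy (Ico_subset_Icc_self hx)
    simpa [(hd_pos x).ne'] using this
  obtain ⟨c, rfl⟩ : ∃ c, φ = fun _ => c :=
    ⟨φ 0, funext fun x => hφ_per.eq_of_deriv_eqOn_zero hL (hφ.differentiable one_ne_zero)
      hderiv x 0⟩
  simp only [intervalIntegral.integral_const, sub_zero, smul_eq_mul] at hφ_norm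
  exact fun _ => eq_one_div_sqrt_of_sq_mul_eq_one (hφ_pos 0) (by linarith)

theorem equality_forces_constant_minimizer
    (L : ℝ) (hL : 0 < L)
    (d : ℝ → ℝ) (hd_smooth : ContDiff ℝ 1 d) (hd_pos : ∀ x, 0 < d x)
    (hd_per : Function.Periodic d L)
    (r : ℝ → ℝ) (hr_cont : Continuous r) (hr_per : Function.Periodic r L)
    (rbar dh lam0 : ℝ)
    (hrbar : rbar = (1 / L) * ∫ x in (0:ℝ)..L, r x)
    (hrbar_pos : 0 < rbar)
    (hdh : dh = L / ∫ x in (0:ℝ)..L, 1 / d x)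
    (hcompat : ∀ x, r x = rbar * (2 - dh / d x))
    (hlam0 : lam0 = Real.sqrt (rbar / dh)) :
    ∀ φ : ℝ → ℝ, ContDiff ℝ 1 φ → (∀ x, 0 < φ x) → Function.Periodic φ L →
      (∫ x in (0:ℝ)..L, φ x ^ 2) = 1 →
      (∫ x in (0:ℝ)..L, d x * |deriv φ x| ^ 2)
        - (∫ x in (0:ℝ)..L, r x * φ x ^ 2)
        - lam0 ^ 2 * L ^ 2 / (∫ x in (0:ℝ)..L, 1 / (d x * φ x ^ 2))
        = -2 * rbar →
      ∀ x, φ x = 1 / Real.sqrt L :=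
  equality_forces_constant_minimizer_general L hL d hd_smooth hd_pos r rbar dh lam0 hrbar_pos hdh
    hcompat hlam0
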